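/- Let $\Delta : (0,\infty) \to [0,\infty)$ be measurable such that $D(x) := \int_0^x \Delta(u)\,du$ is finite and $D(x)/x$ is bounded on $(0,\infty)$. Then for $v \ge 0$, the condition $\lim_{x\downarrow0} D(x)/x = v$ is equivalent to Karlin's condition $\lim_{x\downarrow0}\, x\int_x^\infty \Delta(u)\,u^{-2}\,du = v$. -/

import Mathlib

/-!
Write `D = cumulative Δ` and `G = karlinTail Δ`. Two applications of Tonelli's theorem over the
triangle `{t < u}` (integration by parts in disguise) give, for `x > 0`,

  `2 ∫_x^∞ D(u) u⁻³ du = D(x) / x² + G(x)`  and  `2 ∫_0^x u G(u) du = D(x) + x² G(x)`.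

They are proved in `ℝ≥0∞`, where Tonelli needs no integrability; the first one, together with
`D(x) ≤ C x`, shows `G(x) ≤ 2C / x`, and then both pass to `ℝ`. Substituting `u = x s` turns them
into `x G(x) = 2 ∫_1^∞ (D(xs)/(xs)) s⁻² ds - D(x)/x` and `D(x)/x = 2 ∫_0^1 xs G(xs) ds - x G(x)`:
each quantity is an average of the other (both kernels have mass 2) minus itself. Since `D(x)/x`
and `x G(x)` are bounded, dominated convergence carries a limit `v` of either one through the
average, and the other tends to `2v - v = v`.
-/

open Real Set Filter MeasureTheory Topology
open scoped ENNReal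

theorem lintegral_mul_setLIntegral_Iio_comm {α : Type*} [MeasurableSpace α] [LinearOrder α]
    [TopologicalSpace α] [OrderClosedTopology α] [SecondCountableTopology α]
    [OpensMeasurableSpace α] {μ ν : Measure α} [SFinite μ] [SFinite ν] {f g : α → ℝ≥0∞}
    (hf : Measurable f) (hg : Measurable g) :
    ∫⁻ a, f a * ∫⁻ b in Iio a, g b ∂ν ∂μ = ∫⁻ b, g b * ∫⁻ a in Ioi b, f a ∂μ ∂ν := by
  set F := {p : α × α | p.2 < p.1}.indicator fun p => f p.1 * g p.2
  have hF : Measurable F :=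
    ((hf.comp measurable_fst).mul (hg.comp measurable_snd)).indicator
      (measurableSet_lt measurable_snd measurable_fst)
  have hleft (a : α) : f a * ∫⁻ b in Iio a, g b ∂ν = ∫⁻ b, F (a, b) ∂ν := by
    rw [← lintegral_indicator measurableSet_Iio,
      ← lintegral_const_mul _ (hg.indicator measurableSet_Iio)]
    congr 1 with b
    by_cases h : b < a <;> simp [F, h]
  have hright (b : α) : g b * ∫⁻ a in Ioi b, f a ∂μ = ∫⁻ a, F (a, b) ∂μ := by
    rw [← lintegral_indicator measurableSet_Ioi,
      ← lintegral_const_mul _ (hf.indicator measurableSet_Ioi)]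
    congr 1 with a
    by_cases h : b < a <;> simp [F, h, mul_comm]
  simp_rw [hleft, hright]
  exact lintegral_lintegral_swap hF.aemeasurable

theorem eqOn_inv_pow_rpow_neg (n : ℕ) :
    EqOn (fun u : ℝ => (u ^ n)⁻¹) (fun u => u ^ (-(n : ℝ))) (Ioi 0) := fun u hu => by
  simp [rpow_neg (le_of_lt hu)]

theorem integrableOn_Ioi_inv_pow {n : ℕ} (hn : 1 < n) {a : ℝ} (ha : 0 < a) :
    IntegrableOn (fun u : ℝ => (u ^ n)⁻¹) (Ioi a) :=
  (integrableOn_Ioi_rpow_of_lt (by simpa using (Nat.one_lt_cast (α := ℝ)).2 hn) ha).congr_fun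
    (fun u hu => (eqOn_inv_pow_rpow_neg n (ha.trans hu)).symm) measurableSet_Ioi

theorem integral_Ioi_inv_pow {n : ℕ} (hn : 1 < n) {a : ℝ} (ha : 0 < a) :
    ∫ u in Ioi a, (u ^ n)⁻¹ = (a ^ (n - 1))⁻¹ / (n - 1) := by
  rw [setIntegral_congr_fun measurableSet_Ioi fun u hu => eqOn_inv_pow_rpow_neg n (ha.trans hu),
    integral_Ioi_rpow_of_lt (by simpa using (Nat.one_lt_cast (α := ℝ)).2 hn) ha,
    show -(n : ℝ) + 1 = -((n - 1 : ℕ) : ℝ) by push_cast [Nat.cast_sub hn.le]; ring,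
    rpow_neg ha.le, rpow_natCast, Nat.cast_sub hn.le]
  field_simp
  ring

theorem lintegral_Ioi_ofReal_inv_pow {n : ℕ} (hn : 1 < n) {a : ℝ} (ha : 0 < a) :
    ∫⁻ u in Ioi a, ENNReal.ofReal (u ^ n)⁻¹ = ENNReal.ofReal ((a ^ (n - 1))⁻¹ / (n - 1)) := by
  rw [← ofReal_integral_eq_lintegral_ofReal (integrableOn_Ioi_inv_pow hn ha)
    (ae_restrict_of_forall_mem measurableSet_Ioi fun u hu => by
      have : 0 < u := ha.trans hu
      positivity), integral_Ioi_inv_pow hn ha]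

theorem lintegral_Ioc_ofReal_id {a : ℝ} (ha : 0 ≤ a) :
    ∫⁻ u in Ioc 0 a, ENNReal.ofReal u = ENNReal.ofReal (a ^ 2 / 2) := by
  have hid : IntegrableOn (fun u : ℝ => u) (Ioc 0 a) := continuous_id.integrableOn_Ioc
  rw [← ofReal_integral_eq_lintegral_ofReal hid
    (ae_restrict_of_forall_mem measurableSet_Ioc fun u hu => hu.1.le),
    ← intervalIntegral.integral_of_le ha, integral_id]
  norm_num

theorem lintegral_Ioi_two_mul_ofReal_inv_pow_three {a : ℝ} (ha : 0 < a) :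
    ∫⁻ u in Ioi a, 2 * ENNReal.ofReal (u ^ 3)⁻¹ = ENNReal.ofReal (a ^ 2)⁻¹ := by
  rw [lintegral_const_mul' _ _ ENNReal.ofNat_ne_top, lintegral_Ioi_ofReal_inv_pow (by norm_num) ha,
    ← ENNReal.ofReal_ofNat 2, ← ENNReal.ofReal_mul zero_le_two]
  congr 1
  norm_num
  ring

theorem lintegral_Ioc_two_mul_ofReal {a : ℝ} (ha : 0 ≤ a) :
    ∫⁻ u in Ioc 0 a, 2 * ENNReal.ofReal u = ENNReal.ofReal (a ^ 2) := by
  rw [lintegral_const_mul' _ _ ENNReal.ofNat_ne_top, lintegral_Ioc_ofReal_id ha,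
    ← ENNReal.ofReal_ofNat 2, ← ENNReal.ofReal_mul zero_le_two]
  congr 1
  ring

theorem two_mul_lintegral_Ioi_inv_pow_three_mul_setLIntegral_Ioc {g : ℝ → ℝ≥0∞}
    (hg : Measurable g) {x : ℝ} (hx : 0 < x) :
    2 * ∫⁻ u in Ioi x, ENNReal.ofReal (u ^ 3)⁻¹ * ∫⁻ t in Ioc 0 u, g t =
      (∫⁻ t in Ioc 0 x, g t) * ENNReal.ofReal (x ^ 2)⁻¹ +
        ∫⁻ t in Ioi x, g t * ENNReal.ofReal (t ^ 2)⁻¹ := by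
  have hswap := lintegral_mul_setLIntegral_Iio_comm (μ := volume.restrict (Ioi x))
    (ν := volume.restrict (Ioi 0))
    (by fun_prop : Measurable fun u : ℝ => 2 * ENNReal.ofReal (u ^ 3)⁻¹) hg
  simp only [Measure.restrict_restrict measurableSet_Iio,
    Measure.restrict_restrict measurableSet_Ioi, Iio_inter_Ioi, Ioi_inter_Ioi,
    Measure.restrict_congr_set Ioo_ae_eq_Ioc, mul_assoc] at hswap
  rw [← lintegral_const_mul' _ _ ENNReal.ofNat_ne_top, hswap, ← Ioc_union_Ioi_eq_Ioi hx.le,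
    lintegral_union measurableSet_Ioi Ioc_disjoint_Ioi_same, ← lintegral_mul_const _ hg]
  congr 1
  · refine setLIntegral_congr_fun measurableSet_Ioc fun t ht => ?_
    rw [max_eq_right ht.2, lintegral_Ioi_two_mul_ofReal_inv_pow_three hx]
  · refine setLIntegral_congr_fun measurableSet_Ioi fun t (ht : x < t) => ?_
    rw [max_eq_left ht.le, lintegral_Ioi_two_mul_ofReal_inv_pow_three (hx.trans ht)]

theorem two_mul_lintegral_Ioc_mul_setLIntegral_Ioi {g : ℝ → ℝ≥0∞} (hg : Measurable g)
    {x : ℝ} (hx : 0 ≤ x) :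
    2 * ∫⁻ u in Ioc 0 x, ENNReal.ofReal u * ∫⁻ t in Ioi u, g t =
      (∫⁻ t in Ioc 0 x, g t * ENNReal.ofReal (t ^ 2)) +
        (∫⁻ t in Ioi x, g t) * ENNReal.ofReal (x ^ 2) := by
  have hswap := lintegral_mul_setLIntegral_Iio_comm (μ := volume.restrict (Ioi 0))
    (ν := volume.restrict (Ioc 0 x)) hg (by fun_prop : Measurable fun u : ℝ => 2 * ENNReal.ofReal u)
  simp only [Measure.restrict_congr_set Iio_ae_eq_Iic, Measure.restrict_restrict measurableSet_Iic,
    Measure.restrict_restrict measurableSet_Ioi, inter_comm (Iic _), Ioc_inter_Iic,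
    Ioi_inter_Ioi, mul_assoc] at hswap
  rw [setLIntegral_congr_fun measurableSet_Ioc fun u (hu : u ∈ Ioc 0 x) => by
    rw [max_eq_left hu.1.le], ← Ioc_union_Ioi_eq_Ioi hx,
    lintegral_union measurableSet_Ioi Ioc_disjoint_Ioi_same] at hswap
  rw [← lintegral_const_mul' _ _ ENNReal.ofNat_ne_top, ← hswap]
  congr 1
  · exact setLIntegral_congr_fun measurableSet_Ioc fun t ht => by
      rw [min_eq_right ht.2, lintegral_Ioc_two_mul_ofReal ht.1.le]
  · rw [← lintegral_mul_const _ hg]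
    exact setLIntegral_congr_fun measurableSet_Ioi fun t (ht : x < t) => by
      rw [min_eq_left ht.le, lintegral_Ioc_two_mul_ofReal hx]

theorem tendsto_setIntegral_comp_mul_nhdsGT {φ K : ℝ → ℝ} {s : Set ℝ} {C v : ℝ}
    (hs : MeasurableSet s) (hs0 : s ⊆ Ioi 0) (hφ : Measurable φ)
    (hφC : ∀ x, 0 < x → ‖φ x‖ ≤ C) (hK : IntegrableOn K s) (h : Tendsto φ (𝓝[>] 0) (𝓝 v)) :
    Tendsto (fun x => ∫ t in s, φ (x * t) * K t) (𝓝[>] 0) (𝓝 (v * ∫ t in s, K t)) := by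
  rw [← integral_const_mul]
  refine tendsto_integral_filter_of_dominated_convergence (fun t => C * ‖K t‖)
    (Eventually.of_forall fun x => ((hφ.comp (measurable_const_mul x)).aestronglyMeasurable.mul
      hK.aestronglyMeasurable)) ?_ (hK.norm.const_mul C) ?_
  · filter_upwards [self_mem_nhdsWithin] with x (hx : 0 < x)
    filter_upwards [ae_restrict_mem hs] with t ht
    rw [norm_mul]
    exact mul_le_mul_of_nonneg_right (hφC _ (mul_pos hx (hs0 ht))) (norm_nonneg _)
  · filter_upwards [ae_restrict_mem hs] with t ht
    have hscale : Tendsto (fun x => x * t) (𝓝[>] 0) (𝓝[>] 0) := by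
      simpa using TendstoNhdsWithinIoi.mul_const (hs0 ht) (tendsto_id (x := 𝓝[>] (0 : ℝ)))
    exact (h.comp hscale).mul_const (K t)

noncomputable def cumulative (Δ : ℝ → ℝ) (x : ℝ) : ℝ := ∫ u in Ioc 0 x, Δ u

noncomputable def karlinTail (Δ : ℝ → ℝ) (x : ℝ) : ℝ := ∫ u in Ioi x, Δ u / u ^ 2

section Density

variable {Δ : ℝ → ℝ} {C x : ℝ}

theorem cumulative_nonneg (hnonneg : ∀ t, 0 ≤ Δ t) (x : ℝ) : 0 ≤ cumulative Δ x :=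
  setIntegral_nonneg measurableSet_Ioc fun t _ => hnonneg t

theorem karlinTail_nonneg (hnonneg : ∀ t, 0 ≤ Δ t) (x : ℝ) : 0 ≤ karlinTail Δ x :=
  setIntegral_nonneg measurableSet_Ioi fun t _ => div_nonneg (hnonneg t) (sq_nonneg t)

theorem measurable_cumulative (hmeas : Measurable Δ) (hnonneg : ∀ t, 0 ≤ Δ t) :
    Measurable (cumulative Δ) := by
  have hmono : Monotone fun x => ∫⁻ t in Ioc 0 x, ENNReal.ofReal (Δ t) :=
    fun a b hab => lintegral_mono_set (Ioc_subset_Ioc_right hab)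
  convert hmono.measurable.ennreal_toReal with x
  exact integral_eq_lintegral_of_nonneg_ae (ae_of_all _ hnonneg) hmeas.aestronglyMeasurable

theorem karlinTail_eq_toReal_lintegral (hmeas : Measurable Δ) (hnonneg : ∀ t, 0 ≤ Δ t) (x : ℝ) :
    karlinTail Δ x = (∫⁻ t in Ioi x, ENNReal.ofReal (Δ t / t ^ 2)).toReal :=
  integral_eq_lintegral_of_nonneg_ae (ae_of_all _ fun t => div_nonneg (hnonneg t) (sq_nonneg t))
    (by fun_prop : Measurable fun t => Δ t / t ^ 2).aestronglyMeasurable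

theorem measurable_karlinTail (hmeas : Measurable Δ) (hnonneg : ∀ t, 0 ≤ Δ t) :
    Measurable (karlinTail Δ) := by
  have hanti : Antitone fun x => ∫⁻ t in Ioi x, ENNReal.ofReal (Δ t / t ^ 2) :=
    fun a b hab => lintegral_mono_set (Ioi_subset_Ioi hab)
  rw [funext (karlinTail_eq_toReal_lintegral hmeas hnonneg)]
  exact hanti.measurable.ennreal_toReal

theorem ofReal_cumulative (hnonneg : ∀ t, 0 ≤ Δ t) (hint : IntegrableOn Δ (Ioc 0 x)) :
    ENNReal.ofReal (cumulative Δ x) = ∫⁻ t in Ioc 0 x, ENNReal.ofReal (Δ t) :=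
  ofReal_integral_eq_lintegral_ofReal hint (ae_of_all _ fun t => hnonneg t)

theorem integral_Ioi_inv_pow_three_mul_cumulative_eq_toReal (hmeas : Measurable Δ)
    (hnonneg : ∀ t, 0 ≤ Δ t) (hx : 0 ≤ x) :
    ∫ u in Ioi x, (u ^ 3)⁻¹ * cumulative Δ u =
      (∫⁻ u in Ioi x, ENNReal.ofReal ((u ^ 3)⁻¹ * cumulative Δ u)).toReal := by
  have hD := measurable_cumulative hmeas hnonneg
  refine integral_eq_lintegral_of_nonneg_ae (ae_restrict_of_forall_mem measurableSet_Ioi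
    fun u (hu : x < u) => ?_)
    (by fun_prop : Measurable fun u => (u ^ 3)⁻¹ * cumulative Δ u).aestronglyMeasurable
  have := cumulative_nonneg hnonneg u
  have : 0 < u := hx.trans_lt hu
  positivity

theorem two_mul_lintegral_Ioi_inv_pow_three_mul_cumulative (hmeas : Measurable Δ)
    (hnonneg : ∀ t, 0 ≤ Δ t) (hint : ∀ x, 0 < x → IntegrableOn Δ (Ioc 0 x)) (hx : 0 < x) :
    2 * ∫⁻ u in Ioi x, ENNReal.ofReal ((u ^ 3)⁻¹ * cumulative Δ u) =
      ENNReal.ofReal (cumulative Δ x * (x ^ 2)⁻¹) +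
        ∫⁻ t in Ioi x, ENNReal.ofReal (Δ t / t ^ 2) := by
  have hE := two_mul_lintegral_Ioi_inv_pow_three_mul_setLIntegral_Ioc
    (g := fun t => ENNReal.ofReal (Δ t)) (by fun_prop) hx
  rw [← ofReal_cumulative hnonneg (hint x hx), ← ENNReal.ofReal_mul (cumulative_nonneg hnonneg x)]
    at hE
  rw [setLIntegral_congr_fun measurableSet_Ioi fun u (hu : x < u) => by
    rw [ENNReal.ofReal_mul (inv_nonneg.2 (pow_nonneg (hx.trans hu).le 3)),
      ofReal_cumulative hnonneg (hint u (hx.trans hu))], hE]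
  congr 1
  exact setLIntegral_congr_fun measurableSet_Ioi fun t _ => by
    rw [div_eq_mul_inv, ENNReal.ofReal_mul (hnonneg t)]

theorem lintegral_Ioi_inv_pow_three_mul_cumulative_le (hC : ∀ x, 0 < x → cumulative Δ x / x ≤ C)
    (hx : 0 < x) :
    ∫⁻ u in Ioi x, ENNReal.ofReal ((u ^ 3)⁻¹ * cumulative Δ u) ≤
      ENNReal.ofReal C * ENNReal.ofReal x⁻¹ := by
  calc ∫⁻ u in Ioi x, ENNReal.ofReal ((u ^ 3)⁻¹ * cumulative Δ u)
      ≤ ∫⁻ u in Ioi x, ENNReal.ofReal C * ENNReal.ofReal (u ^ 2)⁻¹ := by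
        refine setLIntegral_mono (by fun_prop) fun u (hu : x < u) => ?_
        have hu0 : 0 < u := hx.trans hu
        rw [← ENNReal.ofReal_mul' (by positivity)]
        refine ENNReal.ofReal_le_ofReal ?_
        calc (u ^ 3)⁻¹ * cumulative Δ u = cumulative Δ u / u * (u ^ 2)⁻¹ := by
              field_simp
          _ ≤ C * (u ^ 2)⁻¹ := by gcongr; exact hC u hu0
    _ = ENNReal.ofReal C * ENNReal.ofReal x⁻¹ := by
        rw [lintegral_const_mul' _ _ ENNReal.ofReal_ne_top,
          lintegral_Ioi_ofReal_inv_pow one_lt_two hx]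
        norm_num

end Density

structure BoundedAverageDensity (Δ : ℝ → ℝ) (C : ℝ) : Prop where
  measurable : Measurable Δ
  nonneg : ∀ t, 0 ≤ Δ t
  integrableOn_Ioc : ∀ x, 0 < x → IntegrableOn Δ (Ioc 0 x)
  cumulative_div_le : ∀ x, 0 < x → cumulative Δ x / x ≤ C

namespace BoundedAverageDensity

variable {Δ : ℝ → ℝ} {C v x : ℝ}

theorem const_nonneg (hΔ : BoundedAverageDensity Δ C) : 0 ≤ C :=
  (cumulative_nonneg hΔ.nonneg 1).trans (by simpa using hΔ.cumulative_div_le 1 one_pos)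

theorem lintegral_div_sq_ne_top (hΔ : BoundedAverageDensity Δ C) (hx : 0 < x) :
    ∫⁻ t in Ioi x, ENNReal.ofReal (Δ t / t ^ 2) ≠ ⊤ := by
  have hA := two_mul_lintegral_Ioi_inv_pow_three_mul_cumulative hΔ.measurable hΔ.nonneg
    hΔ.integrableOn_Ioc hx
  have hbound := lintegral_Ioi_inv_pow_three_mul_cumulative_le hΔ.cumulative_div_le hx
  refine ne_top_of_le_ne_top (b := 2 * (ENNReal.ofReal C * ENNReal.ofReal x⁻¹)) (by finiteness) ?_
  calc _ ≤ _ := le_add_self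
    _ = _ := hA.symm
    _ ≤ _ := by gcongr

theorem ofReal_karlinTail (hΔ : BoundedAverageDensity Δ C) (hx : 0 < x) :
    ENNReal.ofReal (karlinTail Δ x) = ∫⁻ t in Ioi x, ENNReal.ofReal (Δ t / t ^ 2) := by
  rw [karlinTail_eq_toReal_lintegral hΔ.measurable hΔ.nonneg, ENNReal.ofReal_toReal
    (hΔ.lintegral_div_sq_ne_top hx)]

theorem two_mul_integral_Ioi_inv_pow_three_mul_cumulative (hΔ : BoundedAverageDensity Δ C)
    (hx : 0 < x) :
    2 * ∫ u in Ioi x, (u ^ 3)⁻¹ * cumulative Δ u = cumulative Δ x * (x ^ 2)⁻¹ + karlinTail Δ x := by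
  have hA := two_mul_lintegral_Ioi_inv_pow_three_mul_cumulative hΔ.measurable hΔ.nonneg
    hΔ.integrableOn_Ioc hx
  have hD : 0 ≤ cumulative Δ x * (x ^ 2)⁻¹ :=
    mul_nonneg (cumulative_nonneg hΔ.nonneg x) (by positivity)
  rw [integral_Ioi_inv_pow_three_mul_cumulative_eq_toReal hΔ.measurable hΔ.nonneg hx.le,
    karlinTail_eq_toReal_lintegral hΔ.measurable hΔ.nonneg, ← ENNReal.toReal_ofReal hD,
    ← ENNReal.toReal_add ENNReal.ofReal_ne_top (hΔ.lintegral_div_sq_ne_top hx), ← hA,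
    ENNReal.toReal_mul, ENNReal.toReal_ofNat]

theorem mul_karlinTail_le (hΔ : BoundedAverageDensity Δ C) (hx : 0 < x) :
    x * karlinTail Δ x ≤ 2 * C := by
  have hC := hΔ.const_nonneg
  have hbound : ∫ u in Ioi x, (u ^ 3)⁻¹ * cumulative Δ u ≤ C * x⁻¹ := by
    rw [integral_Ioi_inv_pow_three_mul_cumulative_eq_toReal hΔ.measurable hΔ.nonneg hx.le,
      ← ENNReal.toReal_ofReal (mul_nonneg hC (inv_nonneg.2 hx.le)), ENNReal.ofReal_mul hC]
    exact ENNReal.toReal_mono (by finiteness)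
      (lintegral_Ioi_inv_pow_three_mul_cumulative_le hΔ.cumulative_div_le hx)
  have hA := hΔ.two_mul_integral_Ioi_inv_pow_three_mul_cumulative hx
  have hD : 0 ≤ cumulative Δ x * (x ^ 2)⁻¹ :=
    mul_nonneg (cumulative_nonneg hΔ.nonneg x) (by positivity)
  calc x * karlinTail Δ x ≤ x * (2 * (C * x⁻¹)) := by gcongr; linarith
    _ = 2 * C := by field_simp

theorem two_mul_integral_Ioc_mul_karlinTail (hΔ : BoundedAverageDensity Δ C) (hx : 0 < x) :
    2 * ∫ u in Ioc 0 x, u * karlinTail Δ u = cumulative Δ x + karlinTail Δ x * x ^ 2 := by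
  have hmeas := hΔ.measurable
  have hG := measurable_karlinTail hmeas hΔ.nonneg
  have hG0 := karlinTail_nonneg hΔ.nonneg
  have hB := two_mul_lintegral_Ioc_mul_setLIntegral_Ioi
    (g := fun t => ENNReal.ofReal (Δ t / t ^ 2)) (by fun_prop) hx.le
  have hinner : ∫⁻ u in Ioc 0 x, ENNReal.ofReal u * ∫⁻ t in Ioi u, ENNReal.ofReal (Δ t / t ^ 2) =
      ∫⁻ u in Ioc 0 x, ENNReal.ofReal (u * karlinTail Δ u) :=
    setLIntegral_congr_fun measurableSet_Ioc fun u hu => by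
      rw [← hΔ.ofReal_karlinTail hu.1, ← ENNReal.ofReal_mul hu.1.le]
  have hcumulative : ∫⁻ t in Ioc 0 x, ENNReal.ofReal (Δ t / t ^ 2) * ENNReal.ofReal (t ^ 2) =
      ENNReal.ofReal (cumulative Δ x) := by
    rw [ofReal_cumulative hΔ.nonneg (hΔ.integrableOn_Ioc x hx)]
    exact setLIntegral_congr_fun measurableSet_Ioc fun t ht => by
      rw [← ENNReal.ofReal_mul (div_nonneg (hΔ.nonneg t) (sq_nonneg t)),
        div_mul_cancel₀ _ (pow_ne_zero 2 ht.1.ne')]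
  rw [hinner, hcumulative, ← hΔ.ofReal_karlinTail hx, ← ENNReal.ofReal_mul (hG0 x),
    ← ENNReal.ofReal_add (cumulative_nonneg hΔ.nonneg x) (mul_nonneg (hG0 x) (sq_nonneg x))] at hB
  have htoReal : ∫ u in Ioc 0 x, u * karlinTail Δ u =
      (∫⁻ u in Ioc 0 x, ENNReal.ofReal (u * karlinTail Δ u)).toReal :=
    integral_eq_lintegral_of_nonneg_ae (ae_restrict_of_forall_mem measurableSet_Ioc
      fun u hu => mul_nonneg hu.1.le (hG0 u))
      (by fun_prop : Measurable fun u => u * karlinTail Δ u).aestronglyMeasurable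
  rw [htoReal, ← ENNReal.toReal_ofNat 2, ← ENNReal.toReal_mul, hB, ENNReal.toReal_ofReal
    (add_nonneg (cumulative_nonneg hΔ.nonneg x) (mul_nonneg (hG0 x) (sq_nonneg x)))]

theorem mul_karlinTail_eq (hΔ : BoundedAverageDensity Δ C) (hx : 0 < x) :
    x * karlinTail Δ x =
      2 * (∫ t in Ioi 1, cumulative Δ (x * t) / (x * t) * (t ^ 2)⁻¹) - cumulative Δ x / x := by
  have hscale : ∫ t in Ioi 1, cumulative Δ (x * t) / (x * t) * (t ^ 2)⁻¹ =
      x * ∫ u in Ioi x, (u ^ 3)⁻¹ * cumulative Δ u := by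
    rw [setIntegral_congr_fun measurableSet_Ioi
        (g := fun t => x ^ 2 * (((x * t) ^ 3)⁻¹ * cumulative Δ (x * t))) fun t (ht : 1 < t) => by
        have : t ≠ 0 := by positivity
        field_simp,
      integral_const_mul, integral_comp_mul_left_Ioi (fun u => (u ^ 3)⁻¹ * cumulative Δ u) 1 hx,
      mul_one, smul_eq_mul]
    field_simp
  rw [hscale, mul_left_comm, hΔ.two_mul_integral_Ioi_inv_pow_three_mul_cumulative hx]
  field_simp
  ring

theorem cumulative_div_eq (hΔ : BoundedAverageDensity Δ C) (hx : 0 < x) :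
    cumulative Δ x / x =
      2 * (∫ t in Ioc 0 1, x * t * karlinTail Δ (x * t)) - x * karlinTail Δ x := by
  have hscale : ∫ t in Ioc 0 1, x * t * karlinTail Δ (x * t) =
      x⁻¹ * ∫ u in Ioc 0 x, u * karlinTail Δ u := by
    rw [← intervalIntegral.integral_of_le zero_le_one,
      intervalIntegral.integral_comp_mul_left (fun u => u * karlinTail Δ u) hx.ne', mul_zero,
      mul_one, intervalIntegral.integral_of_le hx.le, smul_eq_mul]
  rw [hscale, mul_left_comm, hΔ.two_mul_integral_Ioc_mul_karlinTail hx]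
  field_simp
  ring

theorem tendsto_mul_karlinTail (hΔ : BoundedAverageDensity Δ C)
    (h : Tendsto (fun x => cumulative Δ x / x) (𝓝[>] 0) (𝓝 v)) :
    Tendsto (fun x => x * karlinTail Δ x) (𝓝[>] 0) (𝓝 v) := by
  have hlim := tendsto_setIntegral_comp_mul_nhdsGT (φ := fun x => cumulative Δ x / x)
    measurableSet_Ioi (Ioi_subset_Ioi zero_le_one)
    ((measurable_cumulative hΔ.measurable hΔ.nonneg).div measurable_id)
    (fun x hx => by
      rw [norm_of_nonneg (div_nonneg (cumulative_nonneg hΔ.nonneg x) hx.le)]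
      exact hΔ.cumulative_div_le x hx)
    (integrableOn_Ioi_inv_pow one_lt_two one_pos) h
  refine Tendsto.congr' (eventually_nhdsWithin_of_forall fun x hx =>
    (hΔ.mul_karlinTail_eq hx).symm) ?_
  convert (hlim.const_mul 2).sub h using 2
  norm_num [integral_Ioi_inv_pow one_lt_two one_pos]
  ring

theorem tendsto_cumulative_div (hΔ : BoundedAverageDensity Δ C)
    (h : Tendsto (fun x => x * karlinTail Δ x) (𝓝[>] 0) (𝓝 v)) :
    Tendsto (fun x => cumulative Δ x / x) (𝓝[>] 0) (𝓝 v) := by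
  have hlim := tendsto_setIntegral_comp_mul_nhdsGT (φ := fun x => x * karlinTail Δ x)
    (K := fun _ => 1) (measurableSet_Ioc (b := 1)) (fun t ht => ht.1)
    (measurable_id.mul (measurable_karlinTail hΔ.measurable hΔ.nonneg))
    (fun x hx => by
      rw [norm_of_nonneg (mul_nonneg hx.le (karlinTail_nonneg hΔ.nonneg x))]
      exact hΔ.mul_karlinTail_le hx)
    (integrableOn_const measure_Ioc_lt_top.ne) h
  refine Tendsto.congr' (eventually_nhdsWithin_of_forall fun x hx =>
    (hΔ.cumulative_div_eq hx).symm) ?_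
  convert (hlim.const_mul 2).sub h using 2 <;> simp
  ring

end BoundedAverageDensity

theorem stmt19 (Δ : ℝ → ℝ) (hmeas : Measurable Δ) (hnonneg : ∀ x : ℝ, 0 ≤ Δ x)
    (hint : ∀ x : ℝ, 0 < x → IntegrableOn Δ (Set.Ioc (0 : ℝ) x))
    (D : ℝ → ℝ) (hD : ∀ x : ℝ, D x = ∫ u in Set.Ioc (0 : ℝ) x, Δ u)
    (hbdd : ∃ C : ℝ, ∀ x : ℝ, 0 < x → D x / x ≤ C)
    (v : ℝ) :
    Tendsto (fun x : ℝ => D x / x) (nhdsWithin (0 : ℝ) (Set.Ioi (0 : ℝ))) (nhds v) ↔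
      Tendsto (fun x : ℝ => x * ∫ u in Set.Ioi x, Δ u / u ^ 2)
        (nhdsWithin (0 : ℝ) (Set.Ioi (0 : ℝ))) (nhds v) := by
  obtain rfl : D = cumulative Δ := funext hD
  obtain ⟨C, hC⟩ := hbdd
  have hΔ : BoundedAverageDensity Δ C := ⟨hmeas, hnonneg, hint, hC⟩
  exact ⟨hΔ.tendsto_mul_karlinTail, hΔ.tendsto_cumulative_div⟩
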